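/- Assume η² > ζ² + ι²/β². For N > 0 define f_N : [0,1] → ℝ by f_N(x) = [N^{−p} + ((1/ζ²)(1−x²) + (β²/(β²η² − ι²)) x²)^{p/2}]^{−1/p} · (β²/(β²η² − ι²)) x. Then f_N is strictly increasing on [0,1]. -/

import Mathlib

/-!
Write `A = 1/ζ²`, `B = β²/(β²η² − ι²)` and `q(x) = A(1 − x²) + Bx²`, so that
`f_N(x) = (N^{−p} + q(x)^{p/2})^{−1/p} · B · x`. The hypothesis on `η` says exactly `B < A`,
so `q = A + (B − A)x²` is nonnegative and decreasing on `[0,1]`. Since `t ↦ (N^{−p} + t^{p/2})^{−1/p}`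
is decreasing and positive on `[0,∞)`, the prefactor of `x` is a positive increasing function,
and multiplying it by the strictly increasing `x ≥ 0` gives a strictly increasing function.
-/

/-- The function
`f_N(x) = [N^{−p} + ((1/ζ²)(1−x²) + (β²/(β²η² − ι²)) x²)^{p/2}]^{−1/p} · (β²/(β²η² − ι²)) x`. -/
noncomputable def fN (p β ζ η ι N x : ℝ) : ℝ :=
  (N ^ (-p) + ((1 / ζ ^ 2) * (1 - x ^ 2)
      + (β ^ 2 / (β ^ 2 * η ^ 2 - ι ^ 2)) * x ^ 2) ^ (p / 2)) ^ (-(1 / p))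
    * (β ^ 2 / (β ^ 2 * η ^ 2 - ι ^ 2)) * x

open Set

theorem MonotoneOn.mul_strictMonoOn {α M : Type*} [Preorder α] [Semiring M] [PartialOrder M]
    [IsStrictOrderedRing M] {f g : α → M} {s : Set α} (hf : MonotoneOn f s)
    (hg : StrictMonoOn g s) (hf₀ : ∀ x ∈ s, 0 < f x) (hg₀ : ∀ x ∈ s, 0 ≤ g x) :
    StrictMonoOn (f * g) s := fun x hx y hy hxy ↦
  calc f x * g x ≤ f y * g x := mul_le_mul_of_nonneg_right (hf hx hy hxy.le) (hg₀ x hx)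
    _ < f y * g y := mul_lt_mul_of_pos_left (hg hx hy hxy) (hf₀ y hy)

section RpowAddRpow

variable {c r s : ℝ}

theorem Real.rpow_add_rpow_pos (hc : 0 < c) {t : ℝ} (ht : 0 ≤ t) : 0 < (c + t ^ r) ^ s :=
  Real.rpow_pos_of_pos (add_pos_of_pos_of_nonneg hc (Real.rpow_nonneg ht r)) s

theorem Real.antitoneOn_rpow_add_rpow (hc : 0 < c) (hr : 0 ≤ r) (hs : s ≤ 0) :
    AntitoneOn (fun t : ℝ ↦ (c + t ^ r) ^ s) (Ici 0) := fun _ ht _ _ htu ↦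
  Real.rpow_le_rpow_of_nonpos (add_pos_of_pos_of_nonneg hc (Real.rpow_nonneg ht r))
    (add_le_add_right (Real.rpow_le_rpow ht htu hr) c) hs

end RpowAddRpow

section Interpolation

variable {a b : ℝ}

theorem mul_one_sub_sq_add_mul_sq_nonneg (ha : 0 ≤ a) (hb : 0 ≤ b) {x : ℝ} (hx : x ∈ Icc 0 1) :
    0 ≤ a * (1 - x ^ 2) + b * x ^ 2 := by
  have : x ^ 2 ≤ 1 := pow_le_one₀ hx.1 hx.2
  have : 0 ≤ 1 - x ^ 2 := sub_nonneg.2 this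
  positivity

theorem antitoneOn_mul_one_sub_sq_add_mul_sq (hba : b ≤ a) :
    AntitoneOn (fun x : ℝ ↦ a * (1 - x ^ 2) + b * x ^ 2) (Ici 0) := fun x hx y _ hxy ↦ by
  have hsq : x ^ 2 ≤ y ^ 2 := pow_le_pow_left₀ hx hxy 2
  nlinarith [mul_le_mul_of_nonneg_left hsq (sub_nonneg.2 hba)]

end Interpolation

theorem sq_div_sub_lt_one_div_sq {β ζ η ι : ℝ} (hβ : 0 < β) (hζ : 0 < ζ)
    (hβηι : 0 < β ^ 2 * η ^ 2 - ι ^ 2) (hmat : ζ ^ 2 + ι ^ 2 / β ^ 2 < η ^ 2) :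
    β ^ 2 / (β ^ 2 * η ^ 2 - ι ^ 2) < 1 / ζ ^ 2 := by
  rw [div_lt_div_iff₀ hβηι (by positivity)]
  have h := mul_lt_mul_of_pos_right hmat (by positivity : (0 : ℝ) < β ^ 2)
  rw [add_mul, div_mul_cancel₀ _ (by positivity : β ^ 2 ≠ 0)] at h
  linarith

theorem fN_strictMonoOn_general (p β ζ η ι : ℝ) (hp : 0 < p) (hβ : 0 < β) (hζ : 0 < ζ)
    (hβηι : 0 < β ^ 2 * η ^ 2 - ι ^ 2)
    (hmat : ζ ^ 2 + ι ^ 2 / β ^ 2 < η ^ 2) (N : ℝ) (hN : 0 < N) :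
    StrictMonoOn (fN p β ζ η ι N) (Set.Icc 0 1) := by
  set B := β ^ 2 / (β ^ 2 * η ^ 2 - ι ^ 2)
  have hB : 0 < B := div_pos (by positivity) hβηι
  have hBA : B ≤ 1 / ζ ^ 2 := (sq_div_sub_lt_one_div_sq hβ hζ hβηι hmat).le
  have hc : 0 < N ^ (-p) := Real.rpow_pos_of_pos hN _
  have hq : MapsTo (fun x : ℝ ↦ 1 / ζ ^ 2 * (1 - x ^ 2) + B * x ^ 2) (Icc 0 1) (Ici 0) :=
    fun x hx ↦ mul_one_sub_sq_add_mul_sq_nonneg (by positivity) hB.le hx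
  have hprefactor := ((Real.antitoneOn_rpow_add_rpow hc (by positivity : 0 ≤ p / 2)
      (neg_nonpos.2 (by positivity) : -(1 / p) ≤ 0)).comp
    ((antitoneOn_mul_one_sub_sq_add_mul_sq hBA).mono Icc_subset_Ici_self) hq).mul
    monotoneOn_const (fun x hx ↦ (Real.rpow_add_rpow_pos hc (hq hx)).le) fun _ _ ↦ hB.le
  exact hprefactor.mul_strictMonoOn strictMonoOn_id
    (fun x hx ↦ mul_pos (Real.rpow_add_rpow_pos hc (hq hx)) hB) fun x hx ↦ hx.1

/-- if `η² > ζ² + ι²/β²` then, for every `N > 0`, the function `f_N` is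
strictly increasing on `[0,1]`. -/
theorem fN_strictMonoOn (p β ζ η ι : ℝ) (hp : 0 < p) (hβ : 0 < β) (hζ : 0 < ζ)
    (hη : 0 < η) (hβηι : 0 < β ^ 2 * η ^ 2 - ι ^ 2)
    (hmat : ζ ^ 2 + ι ^ 2 / β ^ 2 < η ^ 2) (N : ℝ) (hN : 0 < N) :
    StrictMonoOn (fN p β ζ η ι N) (Set.Icc 0 1) :=
  fN_strictMonoOn_general p β ζ η ι hp hβ hζ hβηι hmat N hN
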